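/- arXiv:1307.7971 — 3 statements merged into one kernel-verified Lean document; each statement's English description precedes it below -/
import Mathlib

section
/- Let n ≥ 1, a > 0, m a positive integer, and let V : ℝⁿ → ℝ be given by V(q) = a|q|^{2m}. Then for every h > 0 there exist T > 0 and a non-constant C² function q : ℝ → ℝⁿ with q(t+T) = q(t) for all t, such that q̈(t) + ∇V(q(t)) = 0 and (1/2)|q̇(t)|² + V(q(t)) = h for all t ∈ ℝ. -/
open scoped RealInnerProductSpace

/-!
The energy `E(x, v) = v² / 2 + a x ^ (2m)` of the scalar oscillator `ẍ = -2ma x ^ (2m - 1)`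
is quasi-homogeneous, `E(λ x, λ ^ m v) = λ ^ (2m) E(x, v)`, so the level set `E = h` is the
curve `θ ↦ (R θ cos θ, -R θ ^ m sin θ)` with `R` explicit. Along it the Hamiltonian vector
field is a positive multiple `ω θ` of the tangent vector, so solving `θ̇ = ω θ`, by inverting
`t = ∫₀^θ ds / ω s`, turns the curve into a solution; it is periodic because `θ` gains `2π`
in the time `∫₀^{2π} ds / ω s`. Placed on a unit vector `e`, this solution solves the system
in `ℝⁿ`, since `∇ (a |q| ^ (2m)) = 2ma |q| ^ (2m - 2) q`.
-/

open Real Function Filter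

noncomputable def timeMap (ω : ℝ → ℝ) (θ : ℝ) : ℝ := ∫ s in (0 : ℝ)..θ, (ω s)⁻¹

section TimeMap

variable {ω : ℝ → ℝ}

theorem hasDerivAt_timeMap (hω : Continuous ω) (hω_pos : ∀ x, 0 < ω x) (θ : ℝ) :
    HasDerivAt (timeMap ω) (ω θ)⁻¹ θ :=
  ((hω.inv₀ fun x => (hω_pos x).ne').integral_hasStrictDerivAt 0 θ).hasDerivAt

theorem strictMono_timeMap (hω : Continuous ω) (hω_pos : ∀ x, 0 < ω x) :
    StrictMono (timeMap ω) :=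
  strictMono_of_deriv_pos fun θ => (hasDerivAt_timeMap hω hω_pos θ).deriv ▸ inv_pos.2 (hω_pos θ)

theorem timeMap_add_of_periodic (hω : Continuous ω) (hω_pos : ∀ x, 0 < ω x) {P : ℝ}
    (hper : Periodic ω P) (θ : ℝ) :
    timeMap ω (θ + P) = timeMap ω θ + timeMap ω P := by
  have hint : ∀ x y : ℝ, IntervalIntegrable (fun s => (ω s)⁻¹) MeasureTheory.volume x y :=
    (hω.inv₀ fun x => (hω_pos x).ne').intervalIntegrable
  have hper_inv : Periodic (fun s => (ω s)⁻¹) P := fun s => congrArg Inv.inv (hper s)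
  rw [timeMap, ← intervalIntegral.integral_add_adjacent_intervals (hint 0 θ) (hint θ (θ + P)),
    hper_inv.intervalIntegral_add_eq θ 0, zero_add]
  rfl

theorem timeMap_surjective_of_periodic (hω : Continuous ω) (hω_pos : ∀ x, 0 < ω x) {P : ℝ}
    (hP : 0 < P) (hper : Periodic ω P) :
    Surjective (timeMap ω) := by
  obtain ⟨M, hM⟩ := (hper.compact_of_continuous hP.ne' hω).bddAbove
  have hM_pos : 0 < M := (hω_pos 0).trans_le (hM (Set.mem_range_self 0))
  have hτ := hasDerivAt_timeMap hω hω_pos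
  have hgrowth : ∀ x y, x ≤ y → M⁻¹ * (y - x) ≤ timeMap ω y - timeMap ω x :=
    mul_sub_le_image_sub_of_le_deriv (fun θ => (hτ θ).differentiableAt) fun θ =>
      (hτ θ).deriv ▸ inv_anti₀ (hω_pos θ) (hM (Set.mem_range_self θ))
  have hτ0 : timeMap ω 0 = 0 := intervalIntegral.integral_same
  refine Continuous.surjective (continuous_iff_continuousAt.2 fun θ => (hτ θ).continuousAt)
    ?_ ?_
  · refine tendsto_atTop_mono' _ ?_ (tendsto_id.const_mul_atTop (inv_pos.2 hM_pos))
    filter_upwards [eventually_ge_atTop 0] with y hy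
    simpa [hτ0] using hgrowth 0 y hy
  · refine tendsto_atBot_mono' _ ?_ (tendsto_id.const_mul_atBot (inv_pos.2 hM_pos))
    filter_upwards [eventually_le_atBot 0] with y hy
    have := hgrowth y 0 hy
    simp only [hτ0, id] at this ⊢
    linarith

theorem exists_hasDerivAt_eq_comp_of_periodic {P : ℝ} (hω : Continuous ω)
    (hω_pos : ∀ x, 0 < ω x) (hP : 0 < P) (hper : Periodic ω P) :
    ∃ (T : ℝ) (θ : ℝ → ℝ), 0 < T ∧ Surjective θ ∧ (∀ t, θ (t + T) = θ t + P) ∧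
      ∀ t, HasDerivAt θ (ω (θ t)) t := by
  have hmono := strictMono_timeMap hω hω_pos
  let e : ℝ ≃o ℝ :=
    hmono.orderIsoOfSurjective _ (timeMap_surjective_of_periodic hω hω_pos hP hper)
  have he : ∀ θ, e θ = timeMap ω θ := fun _ => rfl
  refine ⟨timeMap ω P, e.symm, ?_, e.symm.surjective, fun t => ?_, fun t => ?_⟩
  · simpa [timeMap] using hmono hP
  · apply e.injective
    rw [e.apply_symm_apply, he, timeMap_add_of_periodic hω hω_pos hper, ← he (e.symm t),
      e.apply_symm_apply]
  · simpa using (hasDerivAt_timeMap hω hω_pos (e.symm t)).of_local_left_inverse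
      e.symm.continuous.continuousAt (inv_ne_zero (hω_pos _).ne')
      (Eventually.of_forall e.apply_symm_apply)

end TimeMap

noncomputable def oscillatorEnergy (a : ℝ) (m : ℕ) (x v : ℝ) : ℝ :=
  v ^ 2 / 2 + a * x ^ (2 * m)

theorem oscillatorEnergy_dilate (a : ℝ) (m : ℕ) (l x v : ℝ) :
    oscillatorEnergy a m (l * x) (l ^ m * v) = l ^ (2 * m) * oscillatorEnergy a m x v := by
  unfold oscillatorEnergy; ring

section LevelCurve

variable {a h : ℝ} {m : ℕ}

theorem oscillatorEnergy_cos_neg_sin_pos (ha : 0 < a) (θ : ℝ) :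
    0 < oscillatorEnergy a m (cos θ) (-sin θ) := by
  rw [oscillatorEnergy, pow_mul]
  rcases eq_or_ne (sin θ) 0 with hs | hs
  · have hc : cos θ ^ 2 = 1 := by nlinarith [sin_sq_add_cos_sq θ]
    simp [hs, hc, ha]
  · have hs' : -sin θ ≠ 0 := neg_ne_zero.2 hs
    positivity

/-- The weighted dilation `(x, v) ↦ (λ x, λ ^ m v)` multiplies the energy by `λ ^ (2 m)`, so
`λ = levelRadius a h m θ` carries `(cos θ, -sin θ)` to the energy level `h`. -/
noncomputable def levelRadius (a h : ℝ) (m : ℕ) (θ : ℝ) : ℝ :=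
  (h / oscillatorEnergy a m (cos θ) (-sin θ)) ^ (2 * m : ℝ)⁻¹

theorem levelRadius_pos (ha : 0 < a) (hh : 0 < h) (θ : ℝ) : 0 < levelRadius a h m θ :=
  rpow_pos_of_pos (div_pos hh (oscillatorEnergy_cos_neg_sin_pos ha θ)) _

theorem oscillatorEnergy_levelRadius (ha : 0 < a) (hh : 0 < h) (hm : m ≠ 0) (θ : ℝ) :
    oscillatorEnergy a m (levelRadius a h m θ * cos θ) (levelRadius a h m θ ^ m * -sin θ) =
      h := by
  have hE := oscillatorEnergy_cos_neg_sin_pos (m := m) ha θ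
  rw [oscillatorEnergy_dilate, levelRadius, show (2 * m : ℝ) = (2 * m : ℕ) by push_cast; ring,
    rpow_inv_natCast_pow (div_pos hh hE).le (by omega), div_mul_cancel₀ _ hE.ne']

theorem periodic_levelRadius : Periodic (levelRadius a h m) (2 * π) := fun θ => by
  simp only [levelRadius, sin_add_two_pi, cos_add_two_pi]

theorem differentiable_levelRadius (ha : 0 < a) (hh : 0 < h) :
    Differentiable ℝ (levelRadius a h m) := fun θ => by
  have hE := oscillatorEnergy_cos_neg_sin_pos (m := m) ha θ
  refine DifferentiableAt.rpow_const ?_ (Or.inl (div_pos hh hE).ne')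
  refine (differentiableAt_const h).div ?_ hE.ne'
  unfold oscillatorEnergy
  fun_prop

/-- With `W = (x, m v)` the generator of the weighted dilations, the Hamiltonian vector field
`X = (v, -2 m a x ^ (2 m - 1))` satisfies `X × W = 2 m E`; comparing with `γ' × W` along the
level curve `γ = (R cos, -R ^ m sin)` gives the angular speed at which the flow traverses `γ`. -/
noncomputable def levelAngularSpeed (a h : ℝ) (m : ℕ) (θ : ℝ) : ℝ :=
  2 * m * h / (levelRadius a h m θ ^ (m + 1) * (cos θ ^ 2 + m * sin θ ^ 2))

theorem cos_sq_add_mul_sin_sq_pos (hm : m ≠ 0) (θ : ℝ) : 0 < cos θ ^ 2 + m * sin θ ^ 2 := by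
  have hm' : (1 : ℝ) ≤ m := by exact_mod_cast Nat.one_le_iff_ne_zero.2 hm
  nlinarith [sin_sq_add_cos_sq θ, sq_nonneg (sin θ)]

theorem levelAngularSpeed_pos (ha : 0 < a) (hh : 0 < h) (hm : m ≠ 0) (θ : ℝ) :
    0 < levelAngularSpeed a h m θ := by
  have := levelRadius_pos (m := m) ha hh θ
  have := cos_sq_add_mul_sin_sq_pos hm θ
  unfold levelAngularSpeed
  positivity

theorem continuous_levelAngularSpeed (ha : 0 < a) (hh : 0 < h) (hm : m ≠ 0) :
    Continuous (levelAngularSpeed a h m) := by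
  have hR := (differentiable_levelRadius (m := m) ha hh).continuous
  exact continuous_const.div (by fun_prop) fun θ =>
    (mul_pos (pow_pos (levelRadius_pos ha hh θ) _) (cos_sq_add_mul_sin_sq_pos hm θ)).ne'

theorem periodic_levelAngularSpeed : Periodic (levelAngularSpeed a h m) (2 * π) := fun θ => by
  simp only [levelAngularSpeed, periodic_levelRadius θ, sin_add_two_pi, cos_add_two_pi]

theorem hasDerivAt_levelCurve (ha : 0 < a) (hh : 0 < h) (hm : m ≠ 0) (θ : ℝ) :
    HasDerivAt (fun φ => levelRadius a h m φ * cos φ)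
        (levelRadius a h m θ ^ m * -sin θ / levelAngularSpeed a h m θ) θ ∧
      HasDerivAt (fun φ => levelRadius a h m φ ^ m * -sin φ)
        (-(2 * m * a * (levelRadius a h m θ * cos θ) ^ (2 * m - 1)) /
          levelAngularSpeed a h m θ) θ := by
  obtain ⟨k, rfl⟩ : ∃ k, m = k + 1 := ⟨m - 1, by omega⟩
  set R := levelRadius a h (k + 1)
  have hR := (differentiable_levelRadius (m := k + 1) ha hh θ).hasDerivAt
  have hx := hR.mul (hasDerivAt_cos θ)
  have hv := (hR.pow (k + 1)).mul (hasDerivAt_sin θ).neg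
  have hconst : HasDerivAt
      (fun φ => oscillatorEnergy a (k + 1) (R φ * cos φ) (R φ ^ (k + 1) * -sin φ)) 0 θ := by
    simp only [R, oscillatorEnergy_levelRadius ha hh hm]
    exact hasDerivAt_const θ h
  -- `deriv R θ` is never computed: the curve lies in an energy level, which pins it down.
  have htangent :=
    (((hv.pow 2).div_const 2).add ((hx.pow (2 * (k + 1))).const_mul a)).unique hconst
  have henergy := (oscillatorEnergy_levelRadius ha hh hm θ).symm.trans
    (oscillatorEnergy_dilate a (k + 1) (R θ) (cos θ) (-sin θ))
  have hh' : (2 * ((k + 1 : ℕ) : ℝ) * h) ≠ 0 := by positivity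
  rw [show 2 * (k + 1) - 1 = 2 * k + 1 by omega] at htangent ⊢
  simp only [oscillatorEnergy, Nat.add_sub_cancel, Pi.mul_apply, Pi.pow_apply,
    Pi.neg_apply] at htangent henergy hx hv
  constructor
  · refine hx.congr_deriv ?_
    rw [levelAngularSpeed, div_div_eq_mul_div, eq_div_iff hh']
    push_cast at htangent ⊢
    linear_combination (2 * (k + 1) * (deriv R θ * cos θ + R θ * -sin θ)) * henergy +
      (R θ * cos θ) * htangent
  · refine hv.congr_deriv ?_
    rw [levelAngularSpeed, div_div_eq_mul_div, eq_div_iff hh']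
    push_cast at htangent ⊢
    linear_combination
      (2 * (k + 1) * ((k + 1 : ℝ) * R θ ^ k * deriv R θ * -sin θ + R θ ^ (k + 1) * -cos θ)) *
        henergy + (-(k + 1) * R θ ^ (k + 1) * sin θ) * htangent

end LevelCurve

theorem exists_periodic_solution_power_oscillator {a h : ℝ} {m : ℕ} (ha : 0 < a) (hh : 0 < h)
    (hm : m ≠ 0) :
    ∃ (T : ℝ) (x v : ℝ → ℝ), 0 < T ∧ (∃ t₁ t₂, x t₁ ≠ x t₂) ∧ Periodic x T ∧
      (∀ t, HasDerivAt x (v t) t) ∧ (∀ t, HasDerivAt v (-(2 * m * a * x t ^ (2 * m - 1))) t) ∧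
      ∀ t, oscillatorEnergy a m (x t) (v t) = h := by
  obtain ⟨T, θ, hT, hθ_surj, hθ_shift, hθ⟩ := exists_hasDerivAt_eq_comp_of_periodic
    (continuous_levelAngularSpeed ha hh hm) (levelAngularSpeed_pos ha hh hm) two_pi_pos
    periodic_levelAngularSpeed
  have hΩ t := (levelAngularSpeed_pos ha hh hm (θ t)).ne'
  obtain ⟨t₁, hθ₁⟩ := hθ_surj 0
  obtain ⟨t₂, hθ₂⟩ := hθ_surj π
  refine ⟨T, fun t => levelRadius a h m (θ t) * cos (θ t),
    fun t => levelRadius a h m (θ t) ^ m * -sin (θ t), hT,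
    ⟨t₁, t₂, ?_⟩, fun t => ?_, fun t => ?_, fun t => ?_,
    fun t => oscillatorEnergy_levelRadius ha hh hm (θ t)⟩
  · have := levelRadius_pos (m := m) ha hh 0
    have := levelRadius_pos (m := m) ha hh π
    simp only [hθ₁, hθ₂, cos_zero, cos_pi]
    linarith
  · simp only [hθ_shift, periodic_levelRadius (θ t), cos_add_two_pi]
  · exact (((hasDerivAt_levelCurve ha hh hm (θ t)).1.comp t (hθ t))).congr_deriv
      (div_mul_cancel₀ _ (hΩ t))
  · exact (((hasDerivAt_levelCurve ha hh hm (θ t)).2.comp t (hθ t))).congr_deriv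
      (div_mul_cancel₀ _ (hΩ t))

theorem contDiff_two_of_hasDerivAt {E : Type*} [NormedAddCommGroup E] [NormedSpace ℝ E]
    {x v w : ℝ → E} (hx : ∀ t, HasDerivAt x (v t) t) (hv : ∀ t, HasDerivAt v (w t) t)
    (hw : Continuous w) : ContDiff ℝ 2 x := by
  rw [show (2 : WithTop ℕ∞) = 1 + 1 from rfl, contDiff_succ_iff_deriv]
  refine ⟨fun t => (hx t).differentiableAt, by simp, ?_⟩
  rw [funext fun t => (hx t).deriv, contDiff_one_iff_deriv]
  exact ⟨fun t => (hv t).differentiableAt, (funext fun t => (hv t).deriv) ▸ hw⟩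

section InnerProductSpace

variable {E : Type*} [NormedAddCommGroup E] [InnerProductSpace ℝ E] [CompleteSpace E]

theorem hasGradientAt_const_mul_norm_pow_two_mul (a : ℝ) (m : ℕ) (q : E) :
    HasGradientAt (fun q => a * ‖q‖ ^ (2 * m)) ((2 * m * a * ‖q‖ ^ (2 * m - 2)) • q) q := by
  simp_rw [pow_mul]
  rw [hasGradientAt_iff_hasFDerivAt]
  refine (((hasDerivAt_pow m _).comp_hasFDerivAt q
    (hasStrictFDerivAt_norm_sq q).hasFDerivAt).const_mul a).congr_fderiv ?_
  ext y
  simp only [← pow_mul, Nat.mul_sub_one, smul_apply, coe_innerSL_apply,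
    nsmul_eq_mul, Nat.cast_ofNat, smul_eq_mul, map_smul, InnerProductSpace.toDual_apply_apply]
  ring

theorem exists_periodic_solution_const_mul_norm_pow [Nontrivial E] {a h : ℝ} {m : ℕ}
    (ha : 0 < a) (hh : 0 < h) (hm : m ≠ 0) :
    ∃ (T : ℝ) (q : ℝ → E), 0 < T ∧ ContDiff ℝ 2 q ∧ (∃ t₁ t₂, q t₁ ≠ q t₂) ∧
      (∀ t, q (t + T) = q t) ∧
      (∀ t, deriv (deriv q) t + gradient (fun q => a * ‖q‖ ^ (2 * m)) (q t) = 0) ∧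
      (∀ t, (1 / 2) * ‖deriv q t‖ ^ 2 + a * ‖q t‖ ^ (2 * m) = h) := by
  obtain ⟨T, x, v, hT, ⟨t₁, t₂, hx₁₂⟩, hx_per, hx, hv, henergy⟩ :=
    exists_periodic_solution_power_oscillator ha hh hm
  obtain ⟨e, he⟩ := exists_norm_eq E zero_le_one
  have he₀ : e ≠ 0 := norm_ne_zero_iff.1 (he ▸ one_ne_zero)
  have hx_cont : Continuous x := continuous_iff_continuousAt.2 fun t => (hx t).continuousAt
  have hq' : deriv (fun t => x t • e) = fun t => v t • e :=
    funext fun t => ((hx t).smul_const e).deriv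
  have hgrad (y : ℝ) :
      gradient (fun q => a * ‖q‖ ^ (2 * m)) (y • e) = (2 * m * a * y ^ (2 * m - 1)) • e := by
    rw [(hasGradientAt_const_mul_norm_pow_two_mul a m (y • e)).gradient, smul_smul, norm_smul,
      he, mul_one, Real.norm_eq_abs, Even.pow_abs ⟨m - 1, by omega⟩, mul_assoc, ← pow_succ,
      show 2 * m - 2 + 1 = 2 * m - 1 by omega]
  refine ⟨T, fun t => x t • e, hT, ?_,
    ⟨t₁, t₂, fun h₁₂ => hx₁₂ (smul_left_injective ℝ he₀ h₁₂)⟩, fun t => by simp only [hx_per t],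
    fun t => ?_, fun t => ?_⟩
  · exact (contDiff_two_of_hasDerivAt hx hv (by fun_prop)).smul contDiff_const
  · rw [hq', ((hv t).smul_const e).deriv, hgrad, ← add_smul, neg_add_cancel, zero_smul]
  · rw [hq', norm_smul, norm_smul, he, mul_one, mul_one, Real.norm_eq_abs, Real.norm_eq_abs,
      sq_abs, Even.pow_abs ⟨m, by omega⟩, ← henergy t, oscillatorEnergy]
    ring

end InnerProductSpace

/-- Corollary 1.5: for `V(q) = a|q|^(2m)` with `a > 0`, the system
`q̈ + ∇V(q) = 0`, `(1/2)|q̇|² + V(q) = h` has a non-constant periodic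
solution for every energy `h > 0`. -/
theorem periodic_solution_power_potential
    (n : ℕ) (hn : 1 ≤ n) (a : ℝ) (ha : 0 < a) (m : ℕ) (hm : 1 ≤ m)
    (V : EuclideanSpace ℝ (Fin n) → ℝ)
    (hVdef : ∀ q, V q = a * ‖q‖ ^ (2 * m))
    (h : ℝ) (hh : 0 < h) :
    ∃ (T : ℝ) (q : ℝ → EuclideanSpace ℝ (Fin n)),
      0 < T ∧ ContDiff ℝ 2 q ∧ (∃ t₁ t₂, q t₁ ≠ q t₂) ∧
      (∀ t, q (t + T) = q t) ∧
      (∀ t, deriv (deriv q) t + gradient V (q t) = 0) ∧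
      (∀ t, (1 / 2) * ‖deriv q t‖ ^ 2 + V (q t) = h) := by
  obtain rfl : V = fun q => a * ‖q‖ ^ (2 * m) := funext hVdef
  have : Nonempty (Fin n) := ⟨⟨0, hn⟩⟩
  exact exists_periodic_solution_const_mul_norm_pow ha hh (by omega)
end

section
/- Let V : ℝⁿ → ℝ be C², h ∈ ℝ, and let u : ℝ → ℝⁿ be a non-constant C² function with period 1 satisfying: (i) ∫₀¹ [V(u(t)) + (1/2)⟨∇V(u(t)), u(t)⟩] dt = h; (ii) ü(t) + T² ∇V(u(t)) = 0 for all t, where T > 0 is defined by 1/T² = (∫₀¹ ⟨∇V(u(t)), u(t)⟩ dt)/(∫₀¹ |u̇(t)|² dt), assuming both integrals are positive. Then the function q(t) := u(t/T) is a non-constant T-periodic C² solution of q̈(t) + ∇V(q(t)) = 0 satisfying the energy identity (1/2)|q̇(t)|² + V(q(t)) = h for all t ∈ ℝ. -/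
open scoped RealInnerProductSpace

/-!
The rescaled curve `q t = u (t / T)` solves Newton's equation `q̈ + ∇V(q) = 0`, so its energy
`½|q̇|² + V(q)` is constant; in terms of `u` this constant is `T⁻²/2 |u̇|² + V(u)` at every time.
Averaging over one period and using `T⁻² ∫₀¹ |u̇|² = ∫₀¹ ⟨∇V(u), u⟩` turns it into the
constraint integral `∫₀¹ [V(u) + ½⟨∇V(u), u⟩] = h`.
-/

section Rescaling

variable {𝕜 F : Type*} [NontriviallyNormedField 𝕜] [NormedAddCommGroup F] [NormedSpace 𝕜 F]

theorem deriv_comp_div_const (u : 𝕜 → F) (T : 𝕜) :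
    deriv (fun s => u (s / T)) = fun t => T⁻¹ • deriv u (t / T) := by
  funext t
  simp only [div_eq_inv_mul]
  exact deriv_comp_mul_left T⁻¹ u t

theorem deriv_deriv_comp_div_const (u : 𝕜 → F) (T : 𝕜) :
    deriv (deriv fun s => u (s / T)) = fun t => T⁻¹ ^ 2 • deriv (deriv u) (t / T) := by
  funext t
  rw [deriv_comp_div_const, deriv_fun_const_smul_field, deriv_comp_div_const, smul_smul, sq]

theorem deriv_deriv_comp_div_const_add_eq_zero {G : F → F} {u : 𝕜 → F} {T : 𝕜} (hT : T ≠ 0)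
    (hu : ∀ t, deriv (deriv u) t + T ^ 2 • G (u t) = 0) (t : 𝕜) :
    deriv (deriv fun s => u (s / T)) t + G (u (t / T)) = 0 :=
  calc deriv (deriv fun s => u (s / T)) t + G (u (t / T))
      = T⁻¹ ^ 2 • (deriv (deriv u) (t / T) + T ^ 2 • G (u (t / T))) := by
        rw [deriv_deriv_comp_div_const, smul_add, smul_smul, ← mul_pow, inv_mul_cancel₀ hT,
          one_pow, one_smul]
    _ = 0 := by rw [hu, smul_zero]

end Rescaling

section Energy

variable {F : Type*} [NormedAddCommGroup F] [InnerProductSpace ℝ F]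

theorem ContDiff.continuous_gradient [CompleteSpace F] {V : F → ℝ} {n : WithTop ℕ∞}
    (hV : ContDiff ℝ n V) (hn : n ≠ 0) : Continuous (gradient V) :=
  (InnerProductSpace.toDual ℝ F).symm.continuous.comp (hV.continuous_fderiv hn)

noncomputable def newtonEnergy (V : F → ℝ) (q : ℝ → F) (t : ℝ) : ℝ :=
  1 / 2 * ‖deriv q t‖ ^ 2 + V (q t)

theorem hasDerivAt_newtonEnergy [CompleteSpace F] {V : F → ℝ} {q : ℝ → F} {t : ℝ}
    (hV : DifferentiableAt ℝ V (q t)) (hq : DifferentiableAt ℝ q t)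
    (hq' : DifferentiableAt ℝ (deriv q) t) :
    HasDerivAt (newtonEnergy V q) ⟪deriv q t, deriv (deriv q) t + gradient V (q t)⟫ t := by
  have hkin := hq'.hasDerivAt.norm_sq.const_mul (1 / 2 : ℝ)
  have hpot := hV.hasFDerivAt.comp_hasDerivAt t hq.hasDerivAt
  refine (hkin.add hpot).congr_deriv ?_
  rw [inner_add_right, real_inner_comm (gradient V (q t)), gradient,
    InnerProductSpace.toDual_symm_apply]
  ring

theorem newtonEnergy_eq_of_deriv_deriv_add_gradient_eq_zero [CompleteSpace F] {V : F → ℝ}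
    {q : ℝ → F} (hV : Differentiable ℝ V) (hq : Differentiable ℝ q)
    (hq' : Differentiable ℝ (deriv q))
    (hnewton : ∀ t, deriv (deriv q) t + gradient V (q t) = 0) (t s : ℝ) :
    newtonEnergy V q t = newtonEnergy V q s := by
  have hE t := hasDerivAt_newtonEnergy (hV (q t)) (hq t) (hq' t)
  simp only [hnewton, inner_zero_right] at hE
  exact is_const_of_deriv_eq_zero (fun t => (hE t).differentiableAt) (fun t => (hE t).deriv) t s

theorem newtonEnergy_comp_div_const (V : F → ℝ) (u : ℝ → F) (T t : ℝ) :
    newtonEnergy V (fun s => u (s / T)) t =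
      T⁻¹ ^ 2 / 2 * ‖deriv u (t / T)‖ ^ 2 + V (u (t / T)) := by
  rw [newtonEnergy, deriv_comp_div_const, norm_smul, mul_pow, Real.norm_eq_abs, sq_abs]
  ring

theorem energy_eq_integral_of_virial [CompleteSpace F] {V : F → ℝ} {u : ℝ → F}
    (hV : ContDiff ℝ 1 V) (hu : ContDiff ℝ 1 u) {T c : ℝ}
    (henergy : ∀ s, T⁻¹ ^ 2 / 2 * ‖deriv u s‖ ^ 2 + V (u s) = c)
    (hvirial : T⁻¹ ^ 2 * ∫ s in (0:ℝ)..1, ‖deriv u s‖ ^ 2 =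
      ∫ s in (0:ℝ)..1, ⟪gradient V (u s), u s⟫) :
    c = ∫ s in (0:ℝ)..1, (V (u s) + 1 / 2 * ⟪gradient V (u s), u s⟫) := by
  have hK : IntervalIntegrable (fun s => ‖deriv u s‖ ^ 2) MeasureTheory.volume 0 1 :=
    ((hu.continuous_deriv le_rfl).norm.pow 2).intervalIntegrable 0 1
  have hpot : IntervalIntegrable (fun s => V (u s)) MeasureTheory.volume 0 1 :=
    (hV.continuous.comp hu.continuous).intervalIntegrable 0 1
  have hP : IntervalIntegrable (fun s => ⟪gradient V (u s), u s⟫) MeasureTheory.volume 0 1 :=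
    (((hV.continuous_gradient one_ne_zero).comp hu.continuous).inner
      hu.continuous).intervalIntegrable 0 1
  calc
    c = ∫ s in (0:ℝ)..1, (T⁻¹ ^ 2 / 2 * ‖deriv u s‖ ^ 2 + V (u s)) := by
      simp only [henergy, intervalIntegral.integral_const, sub_zero, one_smul]
    _ = T⁻¹ ^ 2 / 2 * (∫ s in (0:ℝ)..1, ‖deriv u s‖ ^ 2) + ∫ s in (0:ℝ)..1, V (u s) := by
      rw [intervalIntegral.integral_add (hK.const_mul _) hpot, intervalIntegral.integral_const_mul]
    _ = ∫ s in (0:ℝ)..1, (V (u s) + 1 / 2 * ⟪gradient V (u s), u s⟫) := by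
      rw [intervalIntegral.integral_add hpot (hP.const_mul _), intervalIntegral.integral_const_mul,
        ← hvirial]
      ring

end Energy

theorem rescaled_solution_has_energy_h_general
    (n : ℕ) (V : EuclideanSpace ℝ (Fin n) → ℝ) (hV : ContDiff ℝ 2 V) (h : ℝ)
    (u : ℝ → EuclideanSpace ℝ (Fin n)) (hu : ContDiff ℝ 2 u)
    (hnc : ∃ t₁ t₂, u t₁ ≠ u t₂)
    (hper : ∀ t, u (t + 1) = u t)
    (hK : 0 < ∫ t in (0:ℝ)..1, ‖deriv u t‖ ^ 2)
    (hcon : ∫ t in (0:ℝ)..1, (V (u t) + (1 / 2) * ⟪gradient V (u t), u t⟫) = h)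
    (T : ℝ) (hT : 0 < T)
    (hTdef : 1 / T ^ 2 = (∫ t in (0:ℝ)..1, ⟪gradient V (u t), u t⟫) /
      (∫ t in (0:ℝ)..1, ‖deriv u t‖ ^ 2))
    (hODE : ∀ t, deriv (deriv u) t + T ^ 2 • gradient V (u t) = 0) :
    ContDiff ℝ 2 (fun t => u (t / T)) ∧
    (∃ t₁ t₂, u (t₁ / T) ≠ u (t₂ / T)) ∧
    (∀ t, u ((t + T) / T) = u (t / T)) ∧
    (∀ t, deriv (deriv (fun s => u (s / T))) t + gradient V (u (t / T)) = 0) ∧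
    (∀ t, (1 / 2) * ‖deriv (fun s => u (s / T)) t‖ ^ 2 + V (u (t / T)) = h) := by
  have hT0 : T ≠ 0 := hT.ne'
  have hq : ContDiff ℝ 2 (fun t => u (t / T)) := hu.comp (contDiff_id.div_const T)
  have hnewton := deriv_deriv_comp_div_const_add_eq_zero hT0 hODE
  have hconst := newtonEnergy_eq_of_deriv_deriv_add_gradient_eq_zero
    (hV.differentiable two_ne_zero) (hq.differentiable two_ne_zero)
    (hq.iterate_deriv' 1 1).differentiable_one hnewton
  have henergy (s : ℝ) : T⁻¹ ^ 2 / 2 * ‖deriv u s‖ ^ 2 + V (u s) =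
      newtonEnergy V (fun s => u (s / T)) 0 := by
    rw [← hconst (T * s), newtonEnergy_comp_div_const, mul_div_cancel_left₀ s hT0]
  have hvirial : T⁻¹ ^ 2 * ∫ s in (0:ℝ)..1, ‖deriv u s‖ ^ 2 =
      ∫ s in (0:ℝ)..1, ⟪gradient V (u s), u s⟫ := by
    rw [inv_pow, ← one_div, hTdef, div_mul_cancel₀ _ hK.ne']
  have hE := energy_eq_integral_of_virial (hV.of_le one_le_two) (hu.of_le one_le_two)
    henergy hvirial
  refine ⟨hq, ?_, fun t => ?_, hnewton, fun t => ?_⟩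
  · obtain ⟨t₁, t₂, hne⟩ := hnc
    exact ⟨t₁ * T, t₂ * T, by rwa [mul_div_cancel_right₀ _ hT0, mul_div_cancel_right₀ _ hT0]⟩
  · rw [add_div, div_self hT0, hper]
  · exact (hconst t 0).trans (hE.trans hcon)

/-- Lemma 2.1 (rescaling step): if `u` is a non-constant 1-periodic solution of
`ü + T²∇V(u) = 0` lying on the constraint `∫₀¹ [V(u) + (1/2)⟨∇V(u),u⟩] = h`,
with `1/T² = (∫₀¹⟨∇V(u),u⟩)/(∫₀¹|u̇|²)`, then `q(t) = u(t/T)` is a non-constant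
`T`-periodic solution of `q̈ + ∇V(q) = 0` with energy `h`. -/
theorem rescaled_solution_has_energy_h
    (n : ℕ) (V : EuclideanSpace ℝ (Fin n) → ℝ) (hV : ContDiff ℝ 2 V) (h : ℝ)
    (u : ℝ → EuclideanSpace ℝ (Fin n)) (hu : ContDiff ℝ 2 u)
    (hnc : ∃ t₁ t₂, u t₁ ≠ u t₂)
    (hper : ∀ t, u (t + 1) = u t)
    (hK : 0 < ∫ t in (0:ℝ)..1, ‖deriv u t‖ ^ 2)
    (hP : 0 < ∫ t in (0:ℝ)..1, ⟪gradient V (u t), u t⟫)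
    (hcon : ∫ t in (0:ℝ)..1, (V (u t) + (1 / 2) * ⟪gradient V (u t), u t⟫) = h)
    (T : ℝ) (hT : 0 < T)
    (hTdef : 1 / T ^ 2 = (∫ t in (0:ℝ)..1, ⟪gradient V (u t), u t⟫) /
      (∫ t in (0:ℝ)..1, ‖deriv u t‖ ^ 2))
    (hODE : ∀ t, deriv (deriv u) t + T ^ 2 • gradient V (u t) = 0) :
    ContDiff ℝ 2 (fun t => u (t / T)) ∧
    (∃ t₁ t₂, u (t₁ / T) ≠ u (t₂ / T)) ∧
    (∀ t, u ((t + T) / T) = u (t / T)) ∧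
    (∀ t, deriv (deriv (fun s => u (s / T))) t + gradient V (u (t / T)) = 0) ∧
    (∀ t, (1 / 2) * ‖deriv (fun s => u (s / T)) t‖ ^ 2 + V (u (t / T)) = h) :=
  rescaled_solution_has_energy_h_general n V hV h u hu hnc hper hK hcon T hT hTdef hODE
end

section
/- Let V : ℝⁿ → ℝ be C¹ with ⟨∇V(q), q⟩ > 0 for all q ≠ 0, let μ₁ > 0, μ₂ ≥ 0 with μ₁V(0) ≤ μ₂, and let h > μ₂/μ₁. Let u : ℝ → ℝⁿ be a C¹ 1-periodic function satisfying u(t + 1/2) = −u(t) for all t and the constraint ∫₀¹ [V(u(t)) + (1/2)⟨∇V(u(t)), u(t)⟩] dt = h. Then (1/4)(∫₀¹ |u̇(t)|² dt)(∫₀¹ ⟨∇V(u(t)), u(t)⟩ dt) > 0. -/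
/-!
If `u` vanished identically on `[0, 1]`, the constraint integral would equal `V 0 ≤ μ₂ / μ₁ < h`;
so `u t ≠ 0` for some `t ∈ [0, 1]`, and `∫₀¹ ⟪∇V(u), u⟫ > 0` since the integrand is continuous and
nonnegative. If `u̇` vanished on `[0, 1]`, `u` would be constant there, and `u (1/2) = -u 0` would
force that constant to be `0`; so `∫₀¹ ‖u̇‖² > 0` as well.
-/

open scoped RealInnerProductSpace
open Set Function

theorem exists_mem_uIcc_ne_of_intervalIntegral_comp_ne {E F : Type*}
    [NormedAddCommGroup F] [NormedSpace ℝ F] [CompleteSpace F] {u : ℝ → E} (g : E → F) (c : E)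
    {a b : ℝ}
    (h : ∫ t in a..b, g (u t) ≠ (b - a) • g c) : ∃ t ∈ uIcc a b, u t ≠ c := by
  by_contra! hconst
  refine h ?_
  rw [intervalIntegral.integral_congr (g := fun _ ↦ g c) fun t ht ↦ by rw [hconst t ht]]
  exact intervalIntegral.integral_const _

theorem Function.Antiperiodic.exists_mem_Icc_deriv_ne_zero {E : Type*} [NormedAddCommGroup E]
    [NormedSpace ℝ E] {u : ℝ → E} {c a b t : ℝ} (hanti : Antiperiodic u c)
    (hu : Differentiable ℝ u) (hc : 0 ≤ c) (hcb : a + c ≤ b) (ht : t ∈ Icc a b) (hut : u t ≠ 0) :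
    ∃ s ∈ Icc a b, deriv u s ≠ 0 := by
  by_contra! hderiv
  have hconst : ∀ s ∈ Icc a b, u s = u a :=
    constant_of_has_deriv_right_zero hu.continuous.continuousOn fun s hs ↦ by
      simpa [hderiv s (Ico_subset_Icc_self hs)] using (hu s).hasDerivAt.hasDerivWithinAt
  have hua : (2 : ℝ) • u a = 0 := by
    rw [two_smul, ← eq_neg_iff_add_eq_zero, ← hanti a, hconst (a + c) ⟨by linarith, hcb⟩]
  replace hua := (smul_eq_zero.mp hua).resolve_left two_ne_zero
  exact hut (hconst t ht ▸ hua)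

theorem ContDiff.continuous_gradient_s11 {𝕜 F : Type*} [RCLike 𝕜] [NormedAddCommGroup F]
    [InnerProductSpace 𝕜 F] [CompleteSpace F] {f : F → 𝕜} (hf : ContDiff 𝕜 1 f) :
    Continuous (gradient f) :=
  (InnerProductSpace.toDual 𝕜 F).symm.continuous.comp (hf.continuous_fderiv one_ne_zero)

theorem f_positive_on_symmetric_constraint_general
    (n : ℕ) (V : EuclideanSpace ℝ (Fin n) → ℝ) (hV : ContDiff ℝ 1 V)
    (hV2 : ∀ q : EuclideanSpace ℝ (Fin n), q ≠ 0 → 0 < ⟪gradient V q, q⟫)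
    (μ₁ μ₂ : ℝ) (hμ₁ : 0 < μ₁)
    (hV0 : μ₁ * V 0 ≤ μ₂)
    (h : ℝ) (hh : μ₂ / μ₁ < h)
    (u : ℝ → EuclideanSpace ℝ (Fin n)) (hu : ContDiff ℝ 1 u)
    (hanti : ∀ t, u (t + 1 / 2) = -u t)
    (hcon : ∫ t in (0:ℝ)..1, (V (u t) + (1 / 2) * ⟪gradient V (u t), u t⟫) = h) :
    0 < (1 / 4) * (∫ t in (0:ℝ)..1, ‖deriv u t‖ ^ 2) *
      (∫ t in (0:ℝ)..1, ⟪gradient V (u t), u t⟫) := by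
  have hV0h : V 0 < h := lt_of_le_of_lt ((le_div_iff₀' hμ₁).mpr hV0) hh
  obtain ⟨s, hs, hus⟩ : ∃ s ∈ Icc (0:ℝ) 1, u s ≠ 0 := by
    have hcon_ne : ∫ t in (0:ℝ)..1, (V (u t) + (1 / 2) * ⟪gradient V (u t), u t⟫) ≠
        ((1 : ℝ) - 0) • (V 0 + (1 / 2) * ⟪gradient V 0, 0⟫) := by
      rw [hcon, inner_zero_right]
      simpa using hV0h.ne'
    simpa using exists_mem_uIcc_ne_of_intervalIntegral_comp_ne (u := u)
      (fun q ↦ V q + (1 / 2) * ⟪gradient V q, q⟫) 0 hcon_ne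
  obtain ⟨s', hs', hus'⟩ := Antiperiodic.exists_mem_Icc_deriv_ne_zero hanti
    (hu.differentiable one_ne_zero) (by norm_num) (by norm_num) hs hus
  have hkinetic : 0 < ∫ t in (0:ℝ)..1, ‖deriv u t‖ ^ 2 :=
    intervalIntegral.integral_pos one_pos
      ((hu.continuous_deriv le_rfl).norm.pow 2).continuousOn (fun _ _ ↦ sq_nonneg _)
      ⟨s', hs', by positivity⟩
  have hvirial : 0 < ∫ t in (0:ℝ)..1, ⟪gradient V (u t), u t⟫ := by
    refine intervalIntegral.integral_pos one_pos
      ((hV.continuous_gradient_s11.comp hu.continuous).inner hu.continuous).continuousOn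
      (fun t _ ↦ ?_) ⟨s, hs, hV2 _ hus⟩
    by_cases hut : u t = 0
    · simp [hut]
    · exact (hV2 _ hut).le
  positivity

/-- Claim 3.4: on the symmetric constraint set, the functional
`f(u) = (1/4)(∫₀¹|u̇|²)(∫₀¹⟨∇V(u),u⟩)` is strictly positive: if
`⟨∇V(q),q⟩ > 0` for `q ≠ 0`, `μ₁V(0) ≤ μ₂`, `h > μ₂/μ₁`, and `u` is a C¹
1-periodic antiperiodic (`u(t+1/2) = -u(t)`) function with
`∫₀¹ [V(u) + (1/2)⟨∇V(u),u⟩] dt = h`, then `f(u) > 0`. -/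
theorem f_positive_on_symmetric_constraint
    (n : ℕ) (V : EuclideanSpace ℝ (Fin n) → ℝ) (hV : ContDiff ℝ 1 V)
    (hV2 : ∀ q : EuclideanSpace ℝ (Fin n), q ≠ 0 → 0 < ⟪gradient V q, q⟫)
    (μ₁ μ₂ : ℝ) (hμ₁ : 0 < μ₁) (hμ₂ : 0 ≤ μ₂)
    (hV0 : μ₁ * V 0 ≤ μ₂)
    (h : ℝ) (hh : μ₂ / μ₁ < h)
    (u : ℝ → EuclideanSpace ℝ (Fin n)) (hu : ContDiff ℝ 1 u)
    (hper : ∀ t, u (t + 1) = u t)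
    (hanti : ∀ t, u (t + 1 / 2) = -u t)
    (hcon : ∫ t in (0:ℝ)..1, (V (u t) + (1 / 2) * ⟪gradient V (u t), u t⟫) = h) :
    0 < (1 / 4) * (∫ t in (0:ℝ)..1, ‖deriv u t‖ ^ 2) *
      (∫ t in (0:ℝ)..1, ⟪gradient V (u t), u t⟫) :=
  f_positive_on_symmetric_constraint_general n V hV hV2 μ₁ μ₂ hμ₁ hV0 h hh u hu hanti hcon
end
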